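/- Let D be a minimal strong digraph (MSD), C_q a directed cycle of length q contained in D, and D' the digraph obtained from D by deleting all arcs of C_q. If S is a strong component of D' in which every directed cycle of S contains a vertex of C_q, then every directed path in S between two vertices of C_q that contains at least one intermediate vertex has an intermediate vertex that is linear in D. -/

import Mathlib

/-- A digraph (given by its arc relation `A`) is strongly connected if every vertex
can reach every vertex by a directed path. -/
def StronglyConnected {V : Type*} (A : V → V → Prop) : Prop :=
  ∀ u v : V, Relation.ReflTransGen A u v

/-- A minimal strong digraph: strongly connected, and deleting any arc destroys
strong connectivity. -/
def IsMSD {V : Type*} (A : V → V → Prop) : Prop :=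
  StronglyConnected A ∧
    ∀ a b : V, A a b →
      ¬ StronglyConnected (fun x y => A x y ∧ ¬(x = a ∧ y = b))

/-- `c : ZMod q → V` describes a directed cycle of length `q` contained in the digraph `A`. -/
def IsCycleIn {V : Type*} (A : V → V → Prop) (q : ℕ) (c : ZMod q → V) : Prop :=
  2 ≤ q ∧ Function.Injective c ∧ ∀ i : ZMod q, A (c i) (c (i + 1))

/-- The digraph `D'` obtained from `A` by deleting all arcs of the cycle `c`. -/
def DelCycle {V : Type*} (A : V → V → Prop) (q : ℕ) (c : ZMod q → V) : V → V → Prop :=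
  fun x y => A x y ∧ ¬ ∃ i : ZMod q, x = c i ∧ y = c (i + 1)

/-- Mutual reachability of two vertices. -/
def MutReach {V : Type*} (A : V → V → Prop) (u v : V) : Prop :=
  Relation.ReflTransGen A u v ∧ Relation.ReflTransGen A v u

/-- `S` is (the vertex set of) a strong component of the digraph `A`. -/
def IsSC {V : Type*} (A : V → V → Prop) (S : Set V) : Prop :=
  ∃ v : V, S = {u | MutReach A v u}

/-- Indegree of `v`. -/
noncomputable def indeg {V : Type*} (A : V → V → Prop) (v : V) : ℕ := {u | A u v}.ncard

/-- Outdegree of `v`. -/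
noncomputable def outdeg {V : Type*} (A : V → V → Prop) (v : V) : ℕ := {u | A v u}.ncard

/-- A vertex is linear if its indegree and outdegree both equal 1. -/
def IsLinear {V : Type*} (A : V → V → Prop) (v : V) : Prop :=
  indeg A v = 1 ∧ outdeg A v = 1

/-- A vertex `v` is a cut point if deleting `v` (and its incident arcs) leaves a
digraph whose underlying graph is disconnected. -/
def IsCutPoint {V : Type*} (A : V → V → Prop) (v : V) : Prop :=
  ∃ x y : V, x ≠ v ∧ y ≠ v ∧
    ¬ Relation.ReflTransGen (fun a b => a ≠ v ∧ b ≠ v ∧ (A a b ∨ A b a)) x y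

/-- Adjacency in the condensation (Hasse diagram) of the digraph `A`:
two distinct strong components with an arc from the first to the second. -/
def HAdj {V : Type*} (A : V → V → Prop) (S T : Set V) : Prop :=
  IsSC A S ∧ IsSC A T ∧ S ≠ T ∧ ∃ u ∈ S, ∃ v ∈ T, A u v

noncomputable def HIndeg {V : Type*} (A : V → V → Prop) (S : Set V) : ℕ := {T : Set V | HAdj A T S}.ncard
noncomputable def HOutdeg {V : Type*} (A : V → V → Prop) (S : Set V) : ℕ := {T : Set V | HAdj A S T}.ncard

/-- A vertex of the Hasse diagram is linear if its indegree and outdegree there equal 1. -/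
def HLinear {V : Type*} (A : V → V → Prop) (S : Set V) : Prop :=
  HIndeg A S = 1 ∧ HOutdeg A S = 1

/-- Four elements of `ZMod q` appear in this cyclic order (all distinct). -/
def CyclicOrder4 {q : ℕ} (a b c d : ZMod q) : Prop :=
  0 < (b - a).val ∧ (b - a).val < (c - a).val ∧ (c - a).val < (d - a).val

open Relation

section Aux13
variable {V : Type*}

private lemma rtg_lift {r s : V → V → Prop}
    (h : ∀ x y, r x y → ReflTransGen s x y) :
    ∀ {a b : V}, ReflTransGen r a b → ReflTransGen s a b := by
  intro a b hab
  induction hab with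
  | refl => exact .refl
  | tail _ hstep ih => exact ih.trans (h _ _ hstep)

private lemma msd_essential {A : V → V → Prop} (hMSD : IsMSD A)
    {a b : V} (hab : A a b) :
    ¬ Relation.ReflTransGen (fun x y => A x y ∧ ¬(x = a ∧ y = b)) a b := by
  intro hpath
  refine hMSD.2 a b hab ?_
  intro u v
  refine rtg_lift ?_ (hMSD.1 u v)
  intro x y hxy
  by_cases hcc : x = a ∧ y = b
  · obtain ⟨rfl, rfl⟩ := hcc; exact hpath
  · exact ReflTransGen.single ⟨hxy, hcc⟩

private lemma msd_noloop {A : V → V → Prop} (hMSD : IsMSD A) (a : V) : ¬ A a a := by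
  intro h
  refine hMSD.2 a a h ?_
  intro u v
  refine rtg_lift ?_ (hMSD.1 u v)
  intro x y hxy
  by_cases hcc : x = a ∧ y = a
  · obtain ⟨rfl, h2⟩ := hcc; exact h2 ▸ ReflTransGen.refl
  · exact ReflTransGen.single ⟨hxy, hcc⟩

private lemma split_first {A : V → V → Prop} {e1 e2 : V} {a b : V}
    (h : ReflTransGen A a b) :
    ReflTransGen (fun x y => A x y ∧ ¬(x = e1 ∧ y = e2)) a b ∨
      ReflTransGen (fun x y => A x y ∧ ¬(x = e1 ∧ y = e2)) a e1 := by
  induction h using ReflTransGen.head_induction_on with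
  | refl => exact Or.inl .refl
  | head hstep htail ih =>
    rename_i x y
    by_cases hcc : x = e1 ∧ y = e2
    · exact Or.inr (hcc.1 ▸ ReflTransGen.refl)
    · cases ih with
      | inl h2 => exact Or.inl (h2.head ⟨hstep, hcc⟩)
      | inr h2 => exact Or.inr (h2.head ⟨hstep, hcc⟩)

private lemma split_last {A : V → V → Prop} {e1 e2 : V} {a b : V}
    (h : ReflTransGen A a b) :
    ReflTransGen (fun x y => A x y ∧ ¬(x = e1 ∧ y = e2)) a b ∨
      ReflTransGen (fun x y => A x y ∧ ¬(x = e1 ∧ y = e2)) e2 b := by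
  induction h with
  | refl => exact Or.inl .refl
  | tail hpath hstep ih =>
    rename_i x y
    by_cases hcc : x = e1 ∧ y = e2
    · exact Or.inr (hcc.2 ▸ ReflTransGen.refl)
    · cases ih with
      | inl h2 => exact Or.inl (h2.tail ⟨hstep, hcc⟩)
      | inr h2 => exact Or.inr (h2.tail ⟨hstep, hcc⟩)

private lemma reach_c_first {B : V → V → Prop} {q : ℕ} {c : ZMod q → V} {a b : V}
    (h : ReflTransGen B a b) :
    (∃ x₀, ReflTransGen B a (c x₀)) ∨
      ReflTransGen (fun x y => B x y ∧ x ∉ Set.range c ∧ y ∉ Set.range c) a b := by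
  induction h using ReflTransGen.head_induction_on with
  | refl =>
    by_cases hb : b ∈ Set.range c
    · obtain ⟨x₀, rfl⟩ := hb; exact Or.inl ⟨x₀, .refl⟩
    · exact Or.inr .refl
  | head hstep htail ih =>
    rename_i x y
    by_cases hx : x ∈ Set.range c
    · obtain ⟨x₀, rfl⟩ := hx; exact Or.inl ⟨x₀, .refl⟩
    by_cases hy : y ∈ Set.range c
    · obtain ⟨x₀, rfl⟩ := hy; exact Or.inl ⟨x₀, .single hstep⟩
    cases ih with
    | inl h2 => obtain ⟨x₀, hp⟩ := h2; exact Or.inl ⟨x₀, hp.head hstep⟩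
    | inr h2 => exact Or.inr (h2.head ⟨hstep, hx, hy⟩)

private lemma reach_c_last {B : V → V → Prop} {q : ℕ} {c : ZMod q → V} {a b : V}
    (h : ReflTransGen B a b) :
    (∃ y₀, ReflTransGen B (c y₀) b) ∨
      ReflTransGen (fun x y => B x y ∧ x ∉ Set.range c ∧ y ∉ Set.range c) a b := by
  induction h with
  | refl =>
    by_cases hb : a ∈ Set.range c
    · obtain ⟨x₀, rfl⟩ := hb; exact Or.inl ⟨x₀, .refl⟩
    · exact Or.inr .refl
  | tail hpath hstep ih =>
    rename_i x y
    by_cases hy : y ∈ Set.range c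
    · obtain ⟨y₀, rfl⟩ := hy; exact Or.inl ⟨y₀, .refl⟩
    by_cases hx : x ∈ Set.range c
    · obtain ⟨y₀, rfl⟩ := hx; exact Or.inl ⟨y₀, .single hstep⟩
    cases ih with
    | inl h2 => obtain ⟨y₀, hp⟩ := h2; exact Or.inl ⟨y₀, hp.tail hstep⟩
    | inr h2 => exact Or.inr (h2.tail ⟨hstep, hx, hy⟩)

private lemma ride {p : ℕ} [NeZero p] {r : V → V → Prop} {d : ZMod p → V}
    (hd : ∀ i, r (d i) (d (i + 1))) (x y : ZMod p) :
    ReflTransGen r (d x) (d y) := by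
  have key : ∀ n : ℕ, ReflTransGen r (d x) (d (x + n)) := by
    intro n
    induction n with
    | zero => simpa using ReflTransGen.refl
    | succ n ih =>
      have h2 := ih.tail (hd (x + n))
      have h3 : ((n + 1 : ℕ) : ZMod p) = (n : ZMod p) + 1 := by push_cast; ring
      rw [h3, ← add_assoc]
      exact h2
  have h := key (y - x).val
  rwa [ZMod.natCast_rightInverse (y - x), add_sub_cancel] at h

private lemma exists_nodup_chain {r : V → V → Prop} {a b : V} (h : ReflTransGen r a b) :
    ∃ l : List V, List.Chain r a l ∧ (a :: l).getLast? = some b ∧ (a :: l).Nodup := by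
  induction h using ReflTransGen.head_induction_on with
  | refl => exact ⟨[], List.Chain.nil, rfl, List.nodup_singleton b⟩
  | head hstep htail ih =>
    obtain ⟨l, hchain, hlast, hnodup⟩ := ih
    rename_i x y
    by_cases hx : x ∈ y :: l
    · obtain ⟨s, t, hst⟩ := List.append_of_mem hx
      have hsfx : (x :: t) <:+ (y :: l) := ⟨s, hst.symm⟩
      refine ⟨t, ?_, ?_, ?_⟩
      · have h1 : List.Chain' r (y :: l) := hchain
        exact h1.suffix hsfx
      · rw [← List.getLast?_append_cons s x t, ← hst]
        exact hlast
      · exact (hnodup.sublist (hsfx.sublist) : (x :: t).Nodup)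
    · refine ⟨y :: l, hchain.cons hstep, ?_, List.nodup_cons.mpr ⟨hx, hnodup⟩⟩
      rw [List.getLast?_cons_cons]
      exact hlast

private lemma cycle_contra {A : V → V → Prop} {q : ℕ} {c : ZMod q → V} {S : Set V}
    (hS : IsSC (DelCycle A q c) S)
    (hcycles : ∀ (p : ℕ) (d : ZMod p → V), 2 ≤ p → Function.Injective d →
      Set.range d ⊆ S → (∀ i : ZMod p, DelCycle A q c (d i) (d (i + 1))) →
      ∃ i : ZMod p, d i ∈ Set.range c)
    {a b : V} (haS : a ∈ S)
    (hab : ReflTransGen (fun x y => A x y ∧ x ∉ Set.range c ∧ y ∉ Set.range c) a b)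
    (hba : A b a ∧ b ∉ Set.range c ∧ a ∉ Set.range c) (hne : a ≠ b) : False := by
  obtain ⟨l, hchain, hlast, hnodup⟩ := exists_nodup_chain hab
  have hlne : l ≠ [] := by
    rintro rfl
    simp only [List.getLast?_singleton, Option.some.injEq] at hlast
    exact hne hlast
  set L := a :: l with hL
  have hp2 : 2 ≤ L.length := by
    rcases l with _ | ⟨z, l'⟩
    · exact absurd rfl hlne
    · simp [hL]
  set p := L.length with hp
  haveI : NeZero p := ⟨by omega⟩
  haveI : Fact (1 < p) := ⟨by omega⟩
  have hvlt : ∀ j : ZMod p, j.val < p := fun j => ZMod.val_lt j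
  set d : ZMod p → V := fun j => L.get ⟨j.val, hvlt j⟩ with hd
  have getcong : ∀ (i i' : ℕ) (h : i < p) (h' : i' < p), i = i' →
      L.get ⟨i, h⟩ = L.get ⟨i', h'⟩ := by
    intro i i' h h' he
    subst he
    rfl
  have hchain' : List.Chain' (fun x y => A x y ∧ x ∉ Set.range c ∧ y ∉ Set.range c) L := hchain
  unfold List.Chain' at hchain'; rw [List.isChain_iff_getElem] at hchain'
  have hlastL : L.getLast (List.cons_ne_nil a l) = b := by
    have h2 := List.getLast?_eq_getLast_of_ne_nil (l := L) (List.cons_ne_nil a l)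
    rw [hlast] at h2
    exact Option.some_injective _ h2.symm
  have hgetlast : L.get ⟨p - 1, by omega⟩ = b := by
    rw [← hlastL, List.getLast_eq_getElem]; rfl
  have hget0 : L.get ⟨0, by omega⟩ = a := rfl
  have hval : ∀ j : ZMod p, (j + 1).val = (j.val + 1) % p := by
    intro j
    rw [ZMod.val_add, ZMod.val_one]
  have harc : ∀ j : ZMod p, DelCycle A q c (d j) (d (j + 1)) := by
    intro j
    by_cases hj : j.val + 1 < p
    · have hv : (j + 1).val = j.val + 1 := by rw [hval j, Nat.mod_eq_of_lt hj]
      have hstep := hchain' j.val (by omega)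
      have hdj1 : d (j + 1) = L.get ⟨j.val + 1, hj⟩ := getcong _ _ _ _ hv
      rw [hdj1]
      exact ⟨hstep.1, fun ⟨i0, hx, _⟩ => hstep.2.1 ⟨i0, hx.symm⟩⟩
    · have hjv : j.val + 1 = p := by have := hvlt j; omega
      have h0 : (j + 1).val = 0 := by rw [hval j, hjv, Nat.mod_self]
      have hdj : d j = b := by
        rw [← hgetlast]
        exact getcong _ _ _ _ (by omega)
      have hdj1 : d (j + 1) = a := by
        rw [← hget0]
        exact getcong _ _ _ _ h0
      rw [hdj, hdj1]
      exact ⟨hba.1, fun ⟨i0, hx, _⟩ => hba.2.1 ⟨i0, hx.symm⟩⟩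
  have hinj : Function.Injective d := by
    intro j j' hjj
    have h2 := List.nodup_iff_injective_get.mp hnodup hjj
    have hv : j.val = j'.val := by
      simpa using congrArg Fin.val h2
    exact ZMod.val_injective p hv
  obtain ⟨v₀, rfl⟩ := hS
  have hd0 : d 0 = a := by
    rw [← hget0]
    exact getcong _ _ _ _ (by simp)
  have hrange : Set.range d ⊆ {u | MutReach (DelCycle A q c) v₀ u} := by
    rintro _ ⟨j, rfl⟩
    refine ⟨haS.1.trans ?_, ?_⟩
    · exact hd0 ▸ ride harc 0 j
    · exact (hd0 ▸ ride harc j 0).trans haS.2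
  obtain ⟨i₀, hi₀⟩ := hcycles p d hp2 hinj hrange harc
  by_cases hi : i₀.val + 1 < p
  · exact (hchain' i₀.val (by omega)).2.1 hi₀
  · have hdi : d i₀ = b := by
      rw [← hgetlast]
      exact getcong _ _ _ _ (by have := hvlt i₀; omega)
    exact hba.2.1 (hdi ▸ hi₀)

private lemma out_escape {A : V → V → Prop} {q : ℕ} {c : ZMod q → V} {S : Set V}
    (hMSD : IsMSD A) (hS : IsSC (DelCycle A q c) S)
    (hcycles : ∀ (p : ℕ) (d : ZMod p → V), 2 ≤ p → Function.Injective d →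
      Set.range d ⊆ S → (∀ i : ZMod p, DelCycle A q c (d i) (d (i + 1))) →
      ∃ i : ZMod p, d i ∈ Set.range c)
    {ui un : V} (hiS : ui ∈ S) (he : DelCycle A q c ui un)
    (hcase : ui ∈ Set.range c ∨ ∃ w, A ui w ∧ w ≠ un) :
    ∃ x₀ : ZMod q, ReflTransGen (fun x y => A x y ∧ ¬(x = ui ∧ y = un)) ui (c x₀) := by
  by_cases hui : ui ∈ Set.range c
  · obtain ⟨x₀, hx₀⟩ := hui
    exact ⟨x₀, hx₀ ▸ ReflTransGen.refl⟩
  obtain ⟨w, hw, hwne⟩ := hcase.resolve_left hui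
  have hess := msd_essential hMSD he.1
  have harc' : (fun x y => A x y ∧ ¬(x = ui ∧ y = un)) ui w := ⟨hw, fun h => hwne h.2⟩
  rcases split_first (e1 := ui) (e2 := un) (hMSD.1 w un) with h | h
  · exact absurd (ReflTransGen.head (r := fun x y => A x y ∧ ¬(x = ui ∧ y = un)) harc' h) hess
  rcases reach_c_first (c := c) h with ⟨x₀, hp⟩ | h2
  · exact ⟨x₀, hp.head harc'⟩
  exfalso
  have h3 : ReflTransGen (fun x y => A x y ∧ x ∉ Set.range c ∧ y ∉ Set.range c) w ui :=
    ReflTransGen.mono (fun x y hh => ⟨hh.1.1, hh.2⟩) _ _ h2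
  have hwui : w ≠ ui := fun h => msd_noloop hMSD ui (h ▸ hw)
  rcases h3.cases_tail with heq | ⟨z, hwz, hzui⟩
  · exact hwui heq.symm
  have hwC : w ∉ Set.range c := by
    rcases hwz.cases_head with heq | ⟨z', hwz', _⟩
    · exact heq ▸ hzui.2.1
    · exact hwz'.2.1
  have hzne : ui ≠ z := fun h => msd_noloop hMSD ui (h ▸ hzui.1)
  exact cycle_contra hS hcycles hiS (hwz.head ⟨hw, hui, hwC⟩) hzui hzne

private lemma in_escape {A : V → V → Prop} {q : ℕ} {c : ZMod q → V} {S : Set V}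
    (hMSD : IsMSD A) (hS : IsSC (DelCycle A q c) S)
    (hcycles : ∀ (p : ℕ) (d : ZMod p → V), 2 ≤ p → Function.Injective d →
      Set.range d ⊆ S → (∀ i : ZMod p, DelCycle A q c (d i) (d (i + 1))) →
      ∃ i : ZMod p, d i ∈ Set.range c)
    {ui un : V} (hnS : un ∈ S) (he : DelCycle A q c ui un)
    (hcase : un ∈ Set.range c ∨ ∃ x, A x un ∧ x ≠ ui) :
    ∃ y₀ : ZMod q, ReflTransGen (fun x y => A x y ∧ ¬(x = ui ∧ y = un)) (c y₀) un := by
  by_cases hun : un ∈ Set.range c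
  · obtain ⟨y₀, hy₀⟩ := hun
    exact ⟨y₀, hy₀ ▸ ReflTransGen.refl⟩
  obtain ⟨x, hx, hxne⟩ := hcase.resolve_left hun
  have hess := msd_essential hMSD he.1
  have harc' : (fun x' y => A x' y ∧ ¬(x' = ui ∧ y = un)) x un := ⟨hx, fun h => hxne h.1⟩
  rcases split_last (e1 := ui) (e2 := un) (hMSD.1 ui x) with h | h
  · exact absurd (ReflTransGen.tail (r := fun x y => A x y ∧ ¬(x = ui ∧ y = un)) h harc') hess
  rcases reach_c_last (c := c) h with ⟨y₀, hp⟩ | h2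
  · exact ⟨y₀, hp.tail harc'⟩
  exfalso
  have h3 : ReflTransGen (fun x' y => A x' y ∧ x' ∉ Set.range c ∧ y ∉ Set.range c) un x :=
    ReflTransGen.mono (fun x' y hh => ⟨hh.1.1, hh.2⟩) _ _ h2
  have hxun : x ≠ un := fun h => msd_noloop hMSD un (h ▸ hx)
  have hxC : x ∉ Set.range c := by
    rcases h3.cases_tail with heq | ⟨z, hz, hzx⟩
    · exact absurd heq hxun
    · exact hzx.2.2
  exact cycle_contra hS hcycles hnS h3 ⟨hx, hxC, hun⟩ (Ne.symm hxun)

private lemma no_both {A : V → V → Prop} {q : ℕ} {c : ZMod q → V}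
    (hMSD : IsMSD A) (hc : IsCycleIn A q c)
    {ui un : V} (he : DelCycle A q c ui un)
    (h1 : ∃ x₀ : ZMod q, ReflTransGen (fun x y => A x y ∧ ¬(x = ui ∧ y = un)) ui (c x₀))
    (h2 : ∃ y₀ : ZMod q, ReflTransGen (fun x y => A x y ∧ ¬(x = ui ∧ y = un)) (c y₀) un) :
    False := by
  obtain ⟨x₀, hp1⟩ := h1
  obtain ⟨y₀, hp2⟩ := h2
  haveI : NeZero q := ⟨by have := hc.1; omega⟩
  have hdC : ∀ j : ZMod q, (fun x y => A x y ∧ ¬(x = ui ∧ y = un)) (c j) (c (j + 1)) :=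
    fun j => ⟨hc.2.2 j, fun hh => he.2 ⟨j, hh.1.symm, hh.2.symm⟩⟩
  exact msd_essential hMSD he.1 ((hp1.trans (ride hdC x₀ y₀)).trans hp2)

end Aux13

/-- If every directed cycle of a strong component `S` of `D'` contains a
vertex of `C_q`, then every directed path in `S` between two vertices of `C_q` having an
intermediate vertex has an intermediate vertex that is linear in `D`. -/
theorem stmt13 {V : Type*} [Fintype V] (A : V → V → Prop) (q : ℕ) (c : ZMod q → V)
    (hMSD : IsMSD A) (hc : IsCycleIn A q c) (S : Set V) (hS : IsSC (DelCycle A q c) S)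
    (hcycles : ∀ (p : ℕ) (d : ZMod p → V), 2 ≤ p → Function.Injective d →
      Set.range d ⊆ S → (∀ i : ZMod p, DelCycle A q c (d i) (d (i + 1))) →
      ∃ i : ZMod p, d i ∈ Set.range c)
    (l : List V) (hne : l ≠ []) (hsub : ∀ v ∈ l, v ∈ S)
    (hchain : List.Chain' (DelCycle A q c) l) (hnodup : l.Nodup)
    (hhead : l.head hne ∈ Set.range c) (hlast : l.getLast hne ∈ Set.range c)
    (hmid : l.tail.dropLast ≠ []) :
    ∃ w ∈ l.tail.dropLast, IsLinear A w := by
  classical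
  by_contra hcon
  push_neg at hcon
  set n := l.length with hn
  have hlenmid : l.tail.dropLast.length = n - 1 - 1 := by simp [hn]
  have hn3 : 3 ≤ n := by
    have h2 := List.length_pos_iff.mpr hmid
    omega
  set u : ℕ → V := fun i => l.getD i (l.head hne) with hu
  have hueq : ∀ (i : ℕ) (h : i < n), u i = l[i]'h := by
    intro i h
    simp only [hu]
    exact List.getD_eq_getElem _ _ h
  have hmemS : ∀ (i : ℕ), i < n → u i ∈ S := by
    intro i h
    rw [hueq i h]
    exact hsub _ (List.getElem_mem h)
  have harc : ∀ (i : ℕ), i + 1 < n → DelCycle A q c (u i) (u (i + 1)) := by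
    intro i h
    rw [hueq i (by omega), hueq (i + 1) h]
    unfold List.Chain' at hchain; rw [List.isChain_iff_getElem] at hchain
    have := hchain i (by omega)
    simpa [List.get_eq_getElem] using this
  have hu0 : u 0 ∈ Set.range c := by
    rw [hueq 0 (by omega)]
    rw [List.head_eq_getElem] at hhead
    exact hhead
  have hulast : u (n - 1) ∈ Set.range c := by
    rw [hueq (n - 1) (by omega)]
    rw [List.getLast_eq_getElem] at hlast
    exact hlast
  have hintmem : ∀ (i : ℕ), 1 ≤ i → i + 1 < n → u i ∈ l.tail.dropLast := by
    intro i h1 h2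
    have hlt : i - 1 < l.tail.dropLast.length := by omega
    have : l.tail.dropLast[i - 1]'hlt = u i := by
      rw [List.getElem_dropLast, List.getElem_tail, hueq i (by omega)]
      congr 1
      omega
    rw [← this]
    exact List.getElem_mem hlt
  have hdeg : ∀ (i : ℕ), 1 ≤ i → i + 1 < n →
      (∃ x, A x (u i) ∧ x ≠ u (i - 1)) ∨ (∃ w, A (u i) w ∧ w ≠ u (i + 1)) := by
    intro i h1 h2
    by_contra hno
    push_neg at hno
    obtain ⟨hin, hout⟩ := hno
    refine hcon (u i) (hintmem i h1 h2) ⟨?_, ?_⟩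
    · have hsing : {x | A x (u i)} = {u (i - 1)} := by
        apply Set.eq_singleton_iff_unique_mem.mpr
        constructor
        · have harc' := harc (i - 1) (by omega)
          rw [show i - 1 + 1 = i by omega] at harc'
          exact harc'.1
        · exact fun x hx => hin x hx
      show indeg A (u i) = 1
      rw [indeg, hsing, Set.ncard_singleton]
    · have hsing : {w | A (u i) w} = {u (i + 1)} := by
        apply Set.eq_singleton_iff_unique_mem.mpr
        exact ⟨(harc i h2).1, fun w hw => hout w hw⟩
      show outdeg A (u i) = 1
      rw [outdeg, hsing, Set.ncard_singleton]
  have hPex : ∃ j : ℕ, j + 1 = n ∨ (1 ≤ j ∧ j + 1 < n ∧ ∃ x, A x (u j) ∧ x ≠ u (j - 1)) :=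
    ⟨n - 1, Or.inl (by omega)⟩
  set m := Nat.find hPex with hm
  have hPm := Nat.find_spec hPex
  rw [← hm] at hPm
  have hmle : m ≤ n - 1 := Nat.find_le (Or.inl (by omega))
  have hm1 : 1 ≤ m := by
    by_contra h0
    have hm0 : m = 0 := by omega
    rw [hm0] at hPm
    rcases hPm with h | h
    · omega
    · omega
  set i := m - 1 with hi
  have him : i + 1 = m := by omega
  have hiltn : i + 1 < n := by omega
  have he := harc i hiltn
  have houtprem : u i ∈ Set.range c ∨ ∃ w, A (u i) w ∧ w ≠ u (i + 1) := by
    rcases Nat.eq_zero_or_pos i with h0 | hpos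
    · left
      rw [h0]
      exact hu0
    · have hnP := Nat.find_min hPex (show i < m by omega)
      push_neg at hnP
      obtain ⟨hP1, hP2⟩ := hnP
      rcases hdeg i hpos (by omega) with hin | hout
      · exfalso
        obtain ⟨x, hx, hxne⟩ := hin
        exact hxne (hP2 hpos (by omega) x hx)
      · exact Or.inr hout
  have hinprem : u (i + 1) ∈ Set.range c ∨ ∃ x, A x (u (i + 1)) ∧ x ≠ u i := by
    rw [him]
    rcases hPm with hend | ⟨hm1', hmn, x, hx, hxne⟩
    · left
      rw [show m = n - 1 by omega]
      exact hulast
    · right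
      exact ⟨x, hx, hxne⟩
  exact no_both hMSD hc he
    (out_escape hMSD hS hcycles (hmemS i (by omega)) he houtprem)
    (in_escape hMSD hS hcycles (hmemS (i + 1) (by omega)) he hinprem)
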